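/- arXiv:2411.16584 — 2 statements merged into one kernel-verified Lean document; each statement's English description precedes it below -/
import Mathlib

section
/- Let T be a nondegenerate triangle in ℝ² with vertices v₁, v₂, v₃, and let χ be a polynomial of total degree at most 1. Then for every 1 ≤ p < ∞, (1/3) ∫_T |χ|^p ≤ (A_T/3)(|χ(v₁)|^p + |χ(v₂)|^p + |χ(v₃)|^p) ≤ C ∫_T |χ|^p, where C > 0 is a constant depending only on p (not on T or χ). -/
/-!
For affine `χ` the set `{|χ| ≤ M}` is convex, so on a convex hull `|χ|` is bounded by its
largest vertex value `M`; this gives the first inequality. Conversely, on the image of `T` under the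
homothety of ratio `1/4` centred at a vertex where `M` is attained, `|χ| ≥ M / 2`; that image
lies in `T` and has area `A_T / 16`, whence `A_T M^p ≤ 16 · 2^p ∫_T |χ|^p`. The vertex sum lies
between `M^p` and `3 M^p`.
-/

open MeasureTheory Module

section Affine

variable {E : Type*} [AddCommGroup E] [Module ℝ E]

theorem AffineMap.abs_le_of_mem_convexHull (f : E →ᵃ[ℝ] ℝ) {s : Set E} {M : ℝ}
    (hM : ∀ y ∈ s, |f y| ≤ M) {x : E} (hx : x ∈ convexHull ℝ s) : |f x| ≤ M := by
  have hs : s ⊆ f ⁻¹' Set.Icc (-M) M := fun y hy => abs_le.mp (hM y hy)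
  exact abs_le.mpr (convexHull_min hs ((convex_Icc (-M) M).affine_preimage f) hx)

theorem AffineMap.abs_apply_homothety_ge (f : E →ᵃ[ℝ] ℝ) {x₀ x : E} {r : ℝ} (hr : 0 ≤ r)
    (hx : |f x| ≤ |f x₀|) : (1 - 2 * r) * |f x₀| ≤ |f (AffineMap.homothety x₀ r x)| := by
  rw [AffineMap.homothety_eq_lineMap, AffineMap.apply_lineMap, AffineMap.lineMap_apply_ring]
  have h := abs_sub_abs_le_abs_sub ((1 - r) * f x₀) (-(r * f x))
  rw [sub_neg_eq_add, abs_neg, abs_mul, abs_mul, abs_of_nonneg hr] at h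
  linarith [mul_le_mul_of_nonneg_right (le_abs_self (1 - r)) (abs_nonneg (f x₀)),
    mul_le_mul_of_nonneg_left hx hr]

end Affine

section Integral

variable {E : Type*} [NormedAddCommGroup E] [NormedSpace ℝ E]

theorem setIntegral_abs_rpow_le_of_mem_convexHull [MeasurableSpace E] [BorelSpace E]
    (μ : Measure E) [IsFiniteMeasureOnCompacts μ] {s : Set E} (hs : s.Finite)
    (f : E →ᵃ[ℝ] ℝ) {M : ℝ} (hM : ∀ y ∈ s, |f y| ≤ M) {p : ℝ} (hp : 0 ≤ p) :
    ∫ x in convexHull ℝ s, |f x| ^ p ∂μ ≤ M ^ p * μ.real (convexHull ℝ s) := by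
  refine (Real.le_norm_self _).trans (norm_setIntegral_le_of_norm_le_const
    ((hs.isCompact_convexHull ℝ).measure_lt_top) fun x hx => ?_)
  have hfx := f.abs_le_of_mem_convexHull hM hx
  rw [Real.norm_of_nonneg (by positivity)]
  exact Real.rpow_le_rpow (abs_nonneg _) hfx hp

theorem measureReal_mul_abs_rpow_le_setIntegral [FiniteDimensional ℝ E] [MeasurableSpace E]
    [BorelSpace E] (μ : Measure E) [μ.IsAddHaarMeasure] {K : Set E} (hKc : Convex ℝ K)
    (hK : IsCompact K) (f : E →ᵃ[ℝ] ℝ) {x₀ : E} (hx₀ : x₀ ∈ K)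
    (hmax : ∀ x ∈ K, |f x| ≤ |f x₀|) {p : ℝ} (hp : 0 ≤ p) :
    |f x₀| ^ p * μ.real K ≤ 2 ^ p * 4 ^ finrank ℝ E * ∫ x in K, |f x| ^ p ∂μ := by
  set K' := AffineMap.homothety x₀ (1 / 4 : ℝ) '' K
  have hK'K : K' ⊆ K := by
    rintro _ ⟨x, hx, rfl⟩
    rw [AffineMap.homothety_eq_lineMap]
    exact hKc.lineMap_mem hx₀ hx ⟨by norm_num, by norm_num⟩
  have hK' : IsCompact K' := hK.image (AffineMap.continuous_of_finiteDimensional _)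
  have hvol : μ.real K' = (1 / 4) ^ finrank ℝ E * μ.real K := by
    simp [K', measureReal_def, abs_of_nonneg]
  have hint : IntegrableOn (fun x => |f x| ^ p) K μ :=
    ((continuous_abs.comp (AffineMap.continuous_of_finiteDimensional f)).rpow_const
      fun _ => Or.inr hp).continuousOn.integrableOn_compact hK
  have hlow : ∀ y ∈ K', (|f x₀| / 2) ^ p ≤ |f y| ^ p := by
    rintro _ ⟨x, hx, rfl⟩
    have h := f.abs_apply_homothety_ge (r := 1 / 4) (by norm_num) (hmax x hx)
    exact Real.rpow_le_rpow (by positivity) (by linarith) hp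
  have hK'int : (|f x₀| / 2) ^ p * μ.real K' ≤ ∫ x in K, |f x| ^ p ∂μ :=
    (setIntegral_ge_of_const_le_real hK'.measurableSet hK'.measure_lt_top.ne hlow
      (hint.mono_set hK'K)).trans
      (setIntegral_mono_set hint (.of_forall fun _ => by positivity) hK'K.eventuallyLE)
  rw [hvol, Real.div_rpow (abs_nonneg _) zero_le_two] at hK'int
  calc |f x₀| ^ p * μ.real K
      = 2 ^ p * 4 ^ finrank ℝ E * (|f x₀| ^ p / 2 ^ p * ((1 / 4) ^ finrank ℝ E * μ.real K)) := by
        rw [one_div, inv_pow]; field_simp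
    _ ≤ _ := by gcongr

end Integral

theorem exists_affineMap_coe_eq {a c e : ℝ} {χ : ℝ × ℝ → ℝ}
    (hχ : ∀ q : ℝ × ℝ, χ q = a * q.1 + c * q.2 + e) : ∃ f : ℝ × ℝ →ᵃ[ℝ] ℝ, ⇑f = χ :=
  ⟨(a • LinearMap.fst ℝ ℝ ℝ + c • LinearMap.snd ℝ ℝ ℝ).toAffineMap + AffineMap.const ℝ _ e,
    funext fun q => by simp [hχ]⟩

/-- Marcinkiewicz–Zygmund inequality for the 3-point vertex rule on a
triangle and affine polynomials: for `1 ≤ p < ∞`, there is a constant `C > 0` depending only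
on `p` such that for every nondegenerate triangle `T` and every affine `χ`,
`(1/3)∫_T |χ|^p ≤ (A_T/3)(|χ(v₁)|^p + |χ(v₂)|^p + |χ(v₃)|^p) ≤ C ∫_T |χ|^p`. -/
theorem MZ_vertex_rule_triangle (p : ℝ) (hp : 1 ≤ p) :
    ∃ C : ℝ, 0 < C ∧
      ∀ (v : Fin 3 → ℝ × ℝ), AffineIndependent ℝ v →
      ∀ χ : ℝ × ℝ → ℝ, (∃ a c e : ℝ, ∀ q : ℝ × ℝ, χ q = a * q.1 + c * q.2 + e) →
        (1 / 3) * (∫ q in convexHull ℝ (Set.range v), |χ q| ^ p)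
            ≤ ((volume (convexHull ℝ (Set.range v))).toReal / 3) *
                (|χ (v 0)| ^ p + |χ (v 1)| ^ p + |χ (v 2)| ^ p) ∧
        ((volume (convexHull ℝ (Set.range v))).toReal / 3) *
                (|χ (v 0)| ^ p + |χ (v 1)| ^ p + |χ (v 2)| ^ p)
            ≤ C * ∫ q in convexHull ℝ (Set.range v), |χ q| ^ p := by
  have hp0 : 0 ≤ p := zero_le_one.trans hp
  refine ⟨2 ^ p * 4 ^ 2, by positivity, fun v _ χ ⟨a, c, e, hχ⟩ => ?_⟩
  obtain ⟨f, rfl⟩ := exists_affineMap_coe_eq hχ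
  obtain ⟨m, hm⟩ := Finite.exists_max fun i => |f (v i)|
  have hvert : ∀ y ∈ Set.range v, |f y| ≤ |f (v m)| := by rintro _ ⟨i, rfl⟩; exact hm i
  have hupper := setIntegral_abs_rpow_le_of_mem_convexHull volume (Set.finite_range v) f hvert hp0
  have hlower := measureReal_mul_abs_rpow_le_setIntegral volume (convex_convexHull ℝ _)
    ((Set.finite_range v).isCompact_convexHull ℝ) f (subset_convexHull ℝ _ ⟨m, rfl⟩)
    (fun x hx => f.abs_le_of_mem_convexHull hvert hx) hp0
  have hmax_le_sum : |f (v m)| ^ p ≤ ∑ i, |f (v i)| ^ p :=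
    Finset.single_le_sum (f := fun i => |f (v i)| ^ p) (fun i _ => by positivity)
      (Finset.mem_univ m)
  have hsum_le_max : ∑ i, |f (v i)| ^ p ≤ 3 * |f (v m)| ^ p := by
    simpa using Finset.sum_le_card_nsmul Finset.univ _ _
      fun i _ => Real.rpow_le_rpow (abs_nonneg _) (hm i) hp0
  rw [Fin.sum_univ_three] at hmax_le_sum hsum_le_max
  rw [show finrank ℝ (ℝ × ℝ) = 2 by simp] at hlower
  rw [← measureReal_def]
  set T := convexHull ℝ (Set.range v)
  have hT : 0 ≤ volume.real T := measureReal_nonneg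
  constructor
  · calc 1 / 3 * ∫ q in T, |f q| ^ p ≤ 1 / 3 * (|f (v m)| ^ p * volume.real T) := by gcongr
      _ = volume.real T / 3 * |f (v m)| ^ p := by ring
      _ ≤ _ := by gcongr
  · calc volume.real T / 3 * (|f (v 0)| ^ p + |f (v 1)| ^ p + |f (v 2)| ^ p)
        ≤ volume.real T / 3 * (3 * |f (v m)| ^ p) := by gcongr
      _ = |f (v m)| ^ p * volume.real T := by ring
      _ ≤ _ := hlower
end

section
/- Let Ω ⊂ ℝ² be a polygon and △ a triangulation with vertices {(xⱼ,yⱼ)}_{j=1}^m and mesh size |△|. Suppose for all polynomials χ ∈ ℙ_N: (i) on each T ∈ △, ‖χ‖_{∞,T} − K₁|T|²|χ|_{∞,2,T} ≤ max over vertices v of T of |χ(v)| ≤ ‖χ‖_{∞,T} + K₁|T|²|χ|_{∞,2,T}; and (ii) the Markov bounds |χ|_{∞,1,Ω} ≤ C₅N‖χ‖_{∞,Ω} and |χ|_{∞,2,Ω} ≤ C₅N²‖χ‖_{∞,Ω} hold. Then |max_{1≤j≤m}|χ(xⱼ,yⱼ)| − ‖χ‖_{∞,Ω}| ≤ C N²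 max{|△|, |△|²} ‖χ‖_{∞,Ω} for a constant C depending only on K₁ and C₅. In particular, for any η > 0, if N ≤ c min{|△|^{-1}, |△|^{-1/2}} η^{1/2} for a suitable constant c, then |max_j |χ(xⱼ,yⱼ)| − ‖χ‖_{∞,Ω}| ≤ η ‖χ‖_{∞,Ω}. -/
open MvPolynomial

/-- Evaluation of a bivariate polynomial at a point of `ℝ²`. -/
noncomputable def evP (χ : MvPolynomial (Fin 2) ℝ) (p : ℝ × ℝ) : ℝ := eval ![p.1, p.2] χ

/-- Sup norm `‖g‖_{∞,S}` of a function over a set `S ⊆ ℝ²`. -/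
noncomputable def supOn (g : ℝ × ℝ → ℝ) (S : Set (ℝ × ℝ)) : ℝ := ⨆ q : S, |g q|

/-- The semi-norm `|χ|_{∞,1,S}`: maximum of the sup norms of the first partial derivatives. -/
noncomputable def semiInf1 (χ : MvPolynomial (Fin 2) ℝ) (S : Set (ℝ × ℝ)) : ℝ :=
  max (supOn (evP (pderiv 0 χ)) S) (supOn (evP (pderiv 1 χ)) S)

/-- The semi-norm `|χ|_{∞,2,S}`: maximum of the sup norms of the second partial derivatives. -/
noncomputable def semiInf2 (χ : MvPolynomial (Fin 2) ℝ) (S : Set (ℝ × ℝ)) : ℝ :=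
  max (max (supOn (evP (pderiv 0 (pderiv 0 χ))) S) (supOn (evP (pderiv 0 (pderiv 1 χ))) S))
      (supOn (evP (pderiv 1 (pderiv 1 χ))) S)

/-- The `i`-th triangle of a triangulation. -/
noncomputable def TriP {m n : ℕ} (pts : Fin m → ℝ × ℝ) (idx : Fin n → Fin 3 → Fin m)
    (i : Fin n) : Set (ℝ × ℝ) := convexHull ℝ (Set.range fun k => pts (idx i k))

/-- The triangulated polygon `Ω = ⋃ T`. -/
noncomputable def OmP {m n : ℕ} (pts : Fin m → ℝ × ℝ) (idx : Fin n → Fin 3 → Fin m) :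
    Set (ℝ × ℝ) := ⋃ i, TriP pts idx i

/-!
Hypothesis (i) says that on each triangle `T` the largest vertex value of `|χ|` differs from
`‖χ‖_{∞,T}` by at most `K₁ |T|² |χ|_{∞,2,T}`, and the Markov bound (ii) turns this into the
uniform error `E = K₁ C₅ N² |△|² ‖χ‖_{∞,Ω}`. Every sample point is a vertex of a triangle and every
point of `Ω` lies in a triangle, so taking maxima over the triangles gives both
`maxⱼ |χ(xⱼ,yⱼ)| ≤ ‖χ‖_{∞,Ω} + E` and `‖χ‖_{∞,Ω} ≤ maxⱼ |χ(xⱼ,yⱼ)| + E`.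
-/

section SupOn

variable {g : ℝ × ℝ → ℝ} {S T : Set (ℝ × ℝ)}

lemma supOn_nonneg (g : ℝ × ℝ → ℝ) (S : Set (ℝ × ℝ)) : 0 ≤ supOn g S :=
  Real.iSup_nonneg fun _ => abs_nonneg _

lemma supOn_le {a : ℝ} (ha : 0 ≤ a) (h : ∀ p ∈ S, |g p| ≤ a) : supOn g S ≤ a :=
  Real.iSup_le (fun q => h q q.2) ha

lemma abs_le_supOn (hg : ContinuousOn g S) (hS : IsCompact S) {p : ℝ × ℝ} (hp : p ∈ S) :
    |g p| ≤ supOn g S := by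
  have hbdd : BddAbove ((fun p => |g p|) '' S) := (hS.image_of_continuousOn hg.abs).bddAbove
  rw [Set.image_eq_range] at hbdd
  exact le_ciSup hbdd ⟨p, hp⟩

lemma supOn_mono (hg : ContinuousOn g T) (hT : IsCompact T) (hST : S ⊆ T) :
    supOn g S ≤ supOn g T :=
  supOn_le (supOn_nonneg g T) fun _ hp => abs_le_supOn hg hT (hST hp)

end SupOn

lemma continuous_evP (χ : MvPolynomial (Fin 2) ℝ) : Continuous (evP χ) := by
  have hvec : Continuous fun p : ℝ × ℝ => (![p.1, p.2] : Fin 2 → ℝ) :=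
    continuous_pi fun i => by fin_cases i <;> fun_prop
  exact (continuous_eval χ).comp hvec

lemma semiInf2_nonneg (χ : MvPolynomial (Fin 2) ℝ) (S : Set (ℝ × ℝ)) : 0 ≤ semiInf2 χ S :=
  (supOn_nonneg _ S).trans (le_max_right _ _)

lemma semiInf2_mono (χ : MvPolynomial (Fin 2) ℝ) {S T : Set (ℝ × ℝ)} (hT : IsCompact T)
    (hST : S ⊆ T) : semiInf2 χ S ≤ semiInf2 χ T := by
  have mono := fun ψ : MvPolynomial (Fin 2) ℝ =>
    supOn_mono (continuous_evP ψ).continuousOn hT hST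
  exact max_le_max (max_le_max (mono _) (mono _)) (mono _)

section Triangulation

variable {m n : ℕ} (pts : Fin m → ℝ × ℝ) (idx : Fin n → Fin 3 → Fin m)

lemma isCompact_TriP (i : Fin n) : IsCompact (TriP pts idx i) :=
  (Set.finite_range _).isCompact_convexHull ℝ

lemma isCompact_OmP : IsCompact (OmP pts idx) :=
  isCompact_iUnion (isCompact_TriP pts idx)

lemma TriP_subset_OmP (i : Fin n) : TriP pts idx i ⊆ OmP pts idx :=
  Set.subset_iUnion (TriP pts idx) i

lemma iSup_abs_vertex_le_iSup_abs_pts (g : ℝ × ℝ → ℝ) (i : Fin n) :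
    (⨆ k : Fin 3, |g (pts (idx i k))|) ≤ ⨆ j : Fin m, |g (pts j)| :=
  Real.iSup_le
    (fun k => le_ciSup (f := fun j => |g (pts j)|) (Set.finite_range _).bddAbove (idx i k))
    (Real.iSup_nonneg fun _ => abs_nonneg _)

variable {pts idx}

theorem abs_iSup_abs_pts_sub_supOn_le {g : ℝ × ℝ → ℝ} (hg : Continuous g)
    (hcov : ∀ j : Fin m, ∃ i k, idx i k = j) {E : ℝ} (hE : 0 ≤ E)
    (h : ∀ i, supOn g (TriP pts idx i) - E ≤ (⨆ k : Fin 3, |g (pts (idx i k))|) ∧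
      (⨆ k : Fin 3, |g (pts (idx i k))|) ≤ supOn g (TriP pts idx i) + E) :
    |(⨆ j : Fin m, |g (pts j)|) - supOn g (OmP pts idx)| ≤ E := by
  have hsupT : ∀ i, supOn g (TriP pts idx i) ≤ supOn g (OmP pts idx) := fun i =>
    supOn_mono hg.continuousOn (isCompact_OmP pts idx) (TriP_subset_OmP pts idx i)
  have upper : (⨆ j : Fin m, |g (pts j)|) ≤ supOn g (OmP pts idx) + E := by
    refine Real.iSup_le (fun j => ?_) (add_nonneg (supOn_nonneg _ _) hE)
    obtain ⟨i, k, rfl⟩ := hcov j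
    have hk : |g (pts (idx i k))| ≤ ⨆ k : Fin 3, |g (pts (idx i k))| :=
      le_ciSup (f := fun k => |g (pts (idx i k))|) (Set.finite_range _).bddAbove k
    linarith [(h i).2, hsupT i]
  have lower : supOn g (OmP pts idx) ≤ (⨆ j : Fin m, |g (pts j)|) + E := by
    refine supOn_le (add_nonneg (Real.iSup_nonneg fun _ => abs_nonneg _) hE) fun p hp => ?_
    obtain ⟨i, hpT⟩ := Set.mem_iUnion.mp hp
    have hp' := abs_le_supOn hg.continuousOn (isCompact_TriP pts idx i) hpT
    linarith [(h i).1, iSup_abs_vertex_le_iSup_abs_pts pts idx g i]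
  exact abs_sub_le_iff.mpr ⟨by linarith, by linarith⟩

lemma mul_semiInf2_TriP_le {K₁ C₅ : ℝ} (hK₁ : 0 ≤ K₁) {N : ℕ} {χ : MvPolynomial (Fin 2) ℝ}
    (hM2 : semiInf2 χ (OmP pts idx) ≤ C₅ * N ^ 2 * supOn (evP χ) (OmP pts idx))
    {ℓ : ℝ} {L : ℝ} (hℓ : 0 ≤ ℓ) (hℓL : ℓ ≤ L) (i : Fin n) :
    K₁ * ℓ ^ 2 * semiInf2 χ (TriP pts idx i)
      ≤ K₁ * L ^ 2 * (C₅ * N ^ 2 * supOn (evP χ) (OmP pts idx)) := by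
  have hT := (semiInf2_mono χ (isCompact_OmP pts idx) (TriP_subset_OmP pts idx i)).trans hM2
  have := semiInf2_nonneg χ (TriP pts idx i)
  gcongr

end Triangulation

lemma mul_sq_le_of_le_inv_sqrt_mul_sqrt {K y η : ℝ} (hK : 0 < K) (hy : 0 ≤ y) (hη : 0 ≤ η)
    (h : y ≤ (√K)⁻¹ * √η) : K * y ^ 2 ≤ η := by
  have hsK : 0 < √K := Real.sqrt_pos.mpr hK
  have hle : √K * y ≤ √η := (le_inv_mul_iff₀ hsK).mp h
  calc K * y ^ 2 = (√K * y) ^ 2 := by rw [mul_pow, Real.sq_sqrt hK.le]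
    _ ≤ √η ^ 2 := by gcongr
    _ = η := Real.sq_sqrt hη

/-- `L^∞` Marcinkiewicz–Zygmund inequality on a triangulated polygon:
under the per-triangle two-sided bound (i) and the Markov bounds (ii), there is a constant
`C` depending only on `K₁, C₅` with
`| maxⱼ |χ(ptsⱼ)| − ‖χ‖_{∞,Ω} | ≤ C N² max{|△|, |△|²} ‖χ‖_{∞,Ω}`; in particular, for any
`η > 0`, if `N ≤ c·min{|△|⁻¹, |△|^{-1/2}}·η^{1/2}` for a suitable constant `c`, then
`| maxⱼ |χ(ptsⱼ)| − ‖χ‖_{∞,Ω} | ≤ η ‖χ‖_{∞,Ω}`. -/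
theorem MZ_inf_polygon (K₁ C₅ : ℝ) (hK₁ : 0 < K₁) (hC₅ : 0 < C₅) :
    ∃ C : ℝ, 0 < C ∧ ∃ c : ℝ, 0 < c ∧
      ∀ (m n : ℕ), 0 < m → 0 < n →
      ∀ (pts : Fin m → ℝ × ℝ) (idx : Fin n → Fin 3 → Fin m),
      (∀ i, AffineIndependent ℝ (fun k => pts (idx i k))) →
      -- every sample point is a vertex of some triangle:
      (∀ j : Fin m, ∃ i k, idx i k = j) →
      ∀ (L : ℝ), 0 < L →
      ∀ (ℓ : Fin n → ℝ),
      -- `ℓ i` bounds the edges of triangle `i`, and the mesh size is `L`: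
      (∀ i k k', dist (pts (idx i k)) (pts (idx i k')) ≤ ℓ i) →
      (∀ i, ℓ i ≤ L) →
      ∀ (N : ℕ) (χ : MvPolynomial (Fin 2) ℝ), χ.totalDegree ≤ N →
      -- hypothesis (i): the two-sided per-triangle bound
      (∀ i, supOn (evP χ) (TriP pts idx i) - K₁ * (ℓ i) ^ 2 * semiInf2 χ (TriP pts idx i)
              ≤ (⨆ k : Fin 3, |evP χ (pts (idx i k))|) ∧
            (⨆ k : Fin 3, |evP χ (pts (idx i k))|)
              ≤ supOn (evP χ) (TriP pts idx i) + K₁ * (ℓ i) ^ 2 * semiInf2 χ (TriP pts idx i)) →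
      -- hypothesis (ii): the Markov bounds on `Ω`
      semiInf1 χ (OmP pts idx) ≤ C₅ * N * supOn (evP χ) (OmP pts idx) →
      semiInf2 χ (OmP pts idx) ≤ C₅ * N ^ 2 * supOn (evP χ) (OmP pts idx) →
      (|(⨆ j : Fin m, |evP χ (pts j)|) - supOn (evP χ) (OmP pts idx)|
          ≤ C * N ^ 2 * max L (L ^ 2) * supOn (evP χ) (OmP pts idx)) ∧
      (∀ η : ℝ, 0 < η →
        (N : ℝ) ≤ c * min (1 / L) (1 / Real.sqrt L) * Real.sqrt η →
        |(⨆ j : Fin m, |evP χ (pts j)|) - supOn (evP χ) (OmP pts idx)|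
          ≤ η * supOn (evP χ) (OmP pts idx)) := by
  refine ⟨K₁ * C₅, by positivity, (√(K₁ * C₅))⁻¹, by positivity, ?_⟩
  intro m n _ _ pts idx _ hcov L hL ℓ hedge hℓL N χ _ hyp1 _ hM2
  set M := supOn (evP χ) (OmP pts idx)
  have hℓ : ∀ i, 0 ≤ ℓ i := fun i => dist_self (pts (idx i 0)) ▸ hedge i 0 0
  have hM : 0 ≤ M := supOn_nonneg _ _
  have herr : ∀ i, K₁ * ℓ i ^ 2 * semiInf2 χ (TriP pts idx i) ≤ K₁ * L ^ 2 * (C₅ * N ^ 2 * M) :=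
    fun i => mul_semiInf2_TriP_le hK₁.le hM2 (hℓ i) (hℓL i) i
  have hmain : |(⨆ j : Fin m, |evP χ (pts j)|) - M| ≤ K₁ * C₅ * (N * L) ^ 2 * M := by
    refine abs_iSup_abs_pts_sub_supOn_le (continuous_evP χ) hcov (by positivity) fun i =>
      ⟨by linarith [(hyp1 i).1, herr i], by linarith [(hyp1 i).2, herr i]⟩
  refine ⟨hmain.trans ?_, fun η hη hN => hmain.trans ?_⟩
  · rw [mul_pow, ← mul_assoc (K₁ * C₅)]
    gcongr
    exact le_max_right _ _
  · gcongr
    refine mul_sq_le_of_le_inv_sqrt_mul_sqrt (by positivity) (by positivity) hη.le ?_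
    calc (N : ℝ) * L ≤ (√(K₁ * C₅))⁻¹ * (1 / L) * √η * L := by
          gcongr
          exact hN.trans (by gcongr; exact min_le_left _ _)
      _ = (√(K₁ * C₅))⁻¹ * √η := by field_simp
end
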